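/- arXiv:2311.00575 — 5 statements merged into one kernel-verified Lean document; each statement's English description precedes it below -/
import Mathlib

section
/- Let φ₀(θ) = √(cos θ(sin θ - cos θ)/a) for θ ∈ (π/4, π/2). On the critical manifold S₀² = {(θ, φ₀(θ))}, the nontrivial eigenvalue of the Jacobian of the vector field h(θ,r) = (-sin θ(sin θ - cos θ)p, -r cos θ(sin θ - cos θ)p), p(θ,r) = ar² - cos θ(sin θ - cos θ), equals its trace, and this trace is negative if and only if tan θ > 2 (for θ ∈ (π/4, π/2)), positive if tan θ < 2, and zero at θ = arctan 2. -/
/-!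
Both components of `h` are multiples of `p`, which vanishes on `S₀²`, so there the Jacobian
is the rank-one matrix `g ⊗ ∇p` with `g = -(sin θ - cos θ) (sin θ, r cos θ)`.
Its determinant vanishes and `g` is an eigenvector for the eigenvalue `∇p · g`, the trace.
Using `a r² = cos θ (sin θ - cos θ)` and `sin² θ + cos² θ = 1`, the trace simplifies to
`(sin θ - cos θ)(2 cos θ - sin θ)`, whose first factor is positive on `(π/4, π/2)`.
-/

open Real Matrix

theorem Matrix.hasEigenvalue_toLin'_vecMulVec_trace {R n : Type*} [CommRing R] [Fintype n]
    [DecidableEq n] {u : n → R} (hu : u ≠ 0) (v : n → R) :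
    Module.End.HasEigenvalue (toLin' (vecMulVec u v)) (vecMulVec u v).trace := by
  refine Module.End.hasEigenvalue_of_hasEigenvector (x := u) ⟨?_, hu⟩
  rw [Module.End.mem_eigenspace_iff, toLin'_apply, vecMulVec_mulVec, trace_vecMulVec,
    dotProduct_comm, op_smul_eq_smul]

theorem HasFDerivAt.mul_of_right_eq_zero {E : Type*} [NormedAddCommGroup E] [NormedSpace ℝ E]
    {g P : E → ℝ} {g' P' : E →L[ℝ] ℝ} {x : E} (hg : HasFDerivAt g g' x)
    (hP : HasFDerivAt P P' x) (hx : P x = 0) : HasFDerivAt (fun y => g y * P y) (g x • P') x := by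
  simpa [hx] using hg.fun_mul hP

theorem jacobian_mul_eq_vecMulVec_of_eq_zero {g₁ g₂ P : ℝ × ℝ → ℝ} {z : ℝ × ℝ}
    {P' : ℝ × ℝ →L[ℝ] ℝ} (hg₁ : DifferentiableAt ℝ g₁ z)
    (hg₂ : DifferentiableAt ℝ g₂ z) (hP : HasFDerivAt P P' z) (hz : P z = 0) :
    !![fderiv ℝ (fun w => g₁ w * P w) z (1, 0), fderiv ℝ (fun w => g₁ w * P w) z (0, 1);
       fderiv ℝ (fun w => g₂ w * P w) z (1, 0), fderiv ℝ (fun w => g₂ w * P w) z (0, 1)] =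
      vecMulVec ![g₁ z, g₂ z] ![P' (1, 0), P' (0, 1)] := by
  rw [(hg₁.hasFDerivAt.mul_of_right_eq_zero hP hz).fderiv,
    (hg₂.hasFDerivAt.mul_of_right_eq_zero hP hz).fderiv]
  ext i j
  fin_cases i <;> fin_cases j <;> rfl

theorem hasFDerivAt_sq_sub_cos_mul_sin_sub_cos (a θ r : ℝ) :
    HasFDerivAt (fun z : ℝ × ℝ => a * z.2 ^ 2 - cos z.1 * (sin z.1 - cos z.1))
      ((sin θ * (sin θ - cos θ) - cos θ * (cos θ + sin θ)) • .fst ℝ ℝ ℝ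
        + (2 * a * r) • .snd ℝ ℝ ℝ) (θ, r) := by
  have hcos := (hasFDerivAt_fst (p := (θ, r))).cos
  have hsin := (hasFDerivAt_fst (p := (θ, r))).sin
  have hsq := ((hasFDerivAt_snd (𝕜 := ℝ) (p := (θ, r))).pow 2).const_mul a
  refine (hsq.fun_sub (hcos.fun_mul (hsin.fun_sub hcos))).congr_fderiv ?_
  ext <;> simp <;> ring

theorem trace_jacobian_eq_of_mul_sq_eq {a θ r : ℝ} (hr : a * r ^ 2 = cos θ * (sin θ - cos θ)) :
    (vecMulVec ![-sin θ * (sin θ - cos θ), -r * cos θ * (sin θ - cos θ)]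
      ![sin θ * (sin θ - cos θ) - cos θ * (cos θ + sin θ), 2 * a * r]).trace =
      (sin θ - cos θ) * (2 * cos θ - sin θ) := by
  rw [trace_vecMulVec]
  simp only [dotProduct, Fin.sum_univ_two, cons_val_zero, cons_val_one, cons_val_fin_one]
  linear_combination (-2 * cos θ * (sin θ - cos θ)) * hr
    - (sin θ - cos θ) * (sin θ - 2 * cos θ) * sin_sq_add_cos_sq θ

theorem mul_sq_sqrt_div {a x : ℝ} (ha : 0 < a) (hx : 0 ≤ x) : a * √(x / a) ^ 2 = x := by
  rw [sq_sqrt (div_nonneg hx ha.le), mul_div_cancel₀ x ha.ne']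

theorem cos_pos_and_cos_lt_sin {θ : ℝ} (h₁ : π / 4 < θ) (h₂ : θ < π / 2) :
    0 < cos θ ∧ cos θ < sin θ := by
  refine ⟨cos_pos_of_mem_Ioo ⟨by linarith [pi_pos], h₂⟩, ?_⟩
  rw [← cos_pi_div_two_sub]
  exact cos_lt_cos_of_nonneg_of_le_pi_div_two (by linarith) (by linarith) (by linarith)

theorem two_lt_tan_iff {θ : ℝ} (hc : 0 < cos θ) : 2 < tan θ ↔ 2 * cos θ < sin θ := by
  rw [tan_eq_sin_div_cos, lt_div_iff₀ hc]

theorem tan_lt_two_iff {θ : ℝ} (hc : 0 < cos θ) : tan θ < 2 ↔ sin θ < 2 * cos θ := by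
  rw [tan_eq_sin_div_cos, div_lt_iff₀ hc]

/-- On the critical branch `S₀² = {(θ, φ₀(θ))}`, the Jacobian of `h` has zero
determinant, its nontrivial eigenvalue equals its trace, and the trace is negative
iff `tan θ > 2`, positive iff `tan θ < 2`, and zero at `θ = arctan 2`. -/
theorem jacobian_on_S02_trace_sign (a : ℝ) (ha : 0 < a)
    (p h₁ h₂ : ℝ × ℝ → ℝ) (φ₀ : ℝ → ℝ)
    (hp : p = fun z => a * z.2 ^ 2 - cos z.1 * (sin z.1 - cos z.1))
    (hh₁ : h₁ = fun z => -sin z.1 * (sin z.1 - cos z.1) * p z)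
    (hh₂ : h₂ = fun z => -z.2 * cos z.1 * (sin z.1 - cos z.1) * p z)
    (hφ₀ : φ₀ = fun θ => Real.sqrt (cos θ * (sin θ - cos θ) / a))
    (J : ℝ → Matrix (Fin 2) (Fin 2) ℝ)
    (hJ : J = fun θ =>
      !![fderiv ℝ h₁ (θ, φ₀ θ) (1, 0), fderiv ℝ h₁ (θ, φ₀ θ) (0, 1);
         fderiv ℝ h₂ (θ, φ₀ θ) (1, 0), fderiv ℝ h₂ (θ, φ₀ θ) (0, 1)]) :
    ∀ θ : ℝ, π / 4 < θ → θ < π / 2 →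
      (J θ).det = 0 ∧
      Module.End.HasEigenvalue (Matrix.toLin' (J θ)) ((J θ).trace) ∧
      ((J θ).trace < 0 ↔ 2 < tan θ) ∧
      (0 < (J θ).trace ↔ tan θ < 2) ∧
      (θ = arctan 2 → (J θ).trace = 0) := by
  intro θ hθ₁ hθ₂
  obtain ⟨hc, hcs⟩ := cos_pos_and_cos_lt_sin hθ₁ hθ₂
  set r := φ₀ θ with hr_def
  have hr : a * r ^ 2 = cos θ * (sin θ - cos θ) := by
    rw [hr_def, hφ₀]
    exact mul_sq_sqrt_div ha (mul_nonneg hc.le (sub_nonneg.2 hcs.le))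
  have hJθ : J θ = vecMulVec ![-sin θ * (sin θ - cos θ), -r * cos θ * (sin θ - cos θ)]
      ![sin θ * (sin θ - cos θ) - cos θ * (cos θ + sin θ), 2 * a * r] := by
    have hpD := hp ▸ hasFDerivAt_sq_sub_cos_mul_sin_sub_cos a θ r
    rw [hJ, hh₁, hh₂]
    beta_reduce
    rw [← hr_def, jacobian_mul_eq_vecMulVec_of_eq_zero
      (g₁ := fun z => -sin z.1 * (sin z.1 - cos z.1))
      (g₂ := fun z => -z.2 * cos z.1 * (sin z.1 - cos z.1)) (by fun_prop) (by fun_prop) hpD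
      (by simp [hp, hr])]
    simp
  have htrace : (J θ).trace = (sin θ - cos θ) * (2 * cos θ - sin θ) :=
    hJθ ▸ trace_jacobian_eq_of_mul_sq_eq hr
  have hg : ![-sin θ * (sin θ - cos θ), -r * cos θ * (sin θ - cos θ)] ≠ 0 := fun h => by
    have h0 := congrFun h 0
    simp only [cons_val_zero, Pi.zero_apply, mul_eq_zero, neg_eq_zero, sub_eq_zero] at h0
    rcases h0 with hs | hs <;> linarith
  have hneg : (J θ).trace < 0 ↔ 2 < tan θ := by
    rw [htrace, two_lt_tan_iff hc, ← mul_zero (sin θ - cos θ),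
      mul_lt_mul_iff_right₀ (sub_pos.2 hcs), sub_neg]
  have hpos : 0 < (J θ).trace ↔ tan θ < 2 := by
    rw [htrace, tan_lt_two_iff hc, mul_pos_iff_of_pos_left (sub_pos.2 hcs), sub_pos]
  refine ⟨hJθ ▸ det_vecMulVec _ _, hJθ ▸ hasEigenvalue_toLin'_vecMulVec_trace hg _,
    hneg, hpos, ?_⟩
  rintro rfl
  rw [tan_arctan] at hneg hpos
  exact le_antisymm (not_lt.1 (hpos.not.2 (lt_irrefl 2))) (not_lt.1 (hneg.not.2 (lt_irrefl 2)))
end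

section
/- At θ* = arctan 2, the fast fibre r_{ρ*}(θ) = ρ* sin θ with ρ* = 1/(2√a) and the curve φ₀(θ) = √(cos θ(sin θ - cos θ)/a) have a tangency of order exactly one: r_{ρ*}(θ*) = φ₀(θ*) = 1/√(5a), r_{ρ*}'(θ*) = φ₀'(θ*), and r_{ρ*}''(θ*) ≠ φ₀''(θ*). -/
/-!
Write `g θ = cos θ (sin θ - cos θ) / a`, so that `φ₀ = √g`. Completing the square gives
`g = r_{ρ*}² - (sin θ - 2 cos θ)² / (4a)`, and `sin θ - 2 cos θ` has a simple zero at
`θ* = arctan 2`. Hence `φ₀² - r_{ρ*}² = (φ₀ - r_{ρ*})(φ₀ + r_{ρ*})` has a zero of order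
exactly two at `θ*`, and since `φ₀(θ*) = r_{ρ*}(θ*) ≠ 0` so does `φ₀ - r_{ρ*}`.
-/

open Real Filter Topology

section SquareTangency

variable {𝕜 : Type*} [RCLike 𝕜] {u v w : 𝕜 → 𝕜} {x c : 𝕜}

theorem iteratedDeriv_one_sq (hu : ContDiffAt 𝕜 1 u x) :
    iteratedDeriv 1 (fun y => u y ^ 2) x = 2 * u x * deriv u x := by
  simp only [sq]
  rw [iteratedDeriv_fun_mul hu hu]
  simp [Finset.sum_range_succ]
  ring

theorem iteratedDeriv_two_sq (hu : ContDiffAt 𝕜 2 u x) :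
    iteratedDeriv 2 (fun y => u y ^ 2) x =
      2 * deriv u x ^ 2 + 2 * u x * deriv (deriv u) x := by
  simp only [sq]
  rw [iteratedDeriv_fun_mul hu hu]
  simp [Finset.sum_range_succ, iteratedDeriv_succ]
  ring

theorem iteratedDeriv_sq_eq_of_eventuallyEq {k : ℕ} (hv : ContDiffAt 𝕜 k v x)
    (hw : ContDiffAt 𝕜 k w x)
    (hsq : (fun y => u y ^ 2) =ᶠ[𝓝 x] fun y => v y ^ 2 + c * w y ^ 2) :
    iteratedDeriv k (fun y => u y ^ 2) x =
      iteratedDeriv k (fun y => v y ^ 2) x + c * iteratedDeriv k (fun y => w y ^ 2) x := by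
  rw [hsq.iteratedDeriv_eq, iteratedDeriv_fun_add (hv.pow 2) (contDiffAt_const.mul (hw.pow 2)),
    iteratedDeriv_const_mul_field]

theorem deriv_eq_of_sq_eventuallyEq (hu : ContDiffAt 𝕜 1 u x) (hv : ContDiffAt 𝕜 1 v x)
    (hw : ContDiffAt 𝕜 1 w x)
    (hsq : (fun y => u y ^ 2) =ᶠ[𝓝 x] fun y => v y ^ 2 + c * w y ^ 2)
    (hw0 : w x = 0) (huv : u x = v x) (hu0 : u x ≠ 0) :
    deriv u x = deriv v x := by
  have h := iteratedDeriv_sq_eq_of_eventuallyEq hv hw hsq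
  rw [iteratedDeriv_one_sq hu, iteratedDeriv_one_sq hv, iteratedDeriv_one_sq hw, hw0,
    ← huv] at h
  exact mul_left_cancel₀ (mul_ne_zero two_ne_zero hu0) (by linear_combination h)

theorem deriv_deriv_sub_of_sq_eventuallyEq (hu : ContDiffAt 𝕜 2 u x)
    (hv : ContDiffAt 𝕜 2 v x) (hw : ContDiffAt 𝕜 2 w x)
    (hsq : (fun y => u y ^ 2) =ᶠ[𝓝 x] fun y => v y ^ 2 + c * w y ^ 2)
    (hw0 : w x = 0) (huv : u x = v x) (hu0 : u x ≠ 0) :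
    deriv (deriv u) x - deriv (deriv v) x = c * deriv w x ^ 2 / u x := by
  have h := iteratedDeriv_sq_eq_of_eventuallyEq hv hw hsq
  have h' := deriv_eq_of_sq_eventuallyEq (hu.of_le one_le_two) (hv.of_le one_le_two)
    (hw.of_le one_le_two) hsq hw0 huv hu0
  rw [iteratedDeriv_two_sq hu, iteratedDeriv_two_sq hv, iteratedDeriv_two_sq hw, hw0, ← huv,
    h'] at h
  field_simp
  linear_combination h / 2

end SquareTangency

theorem sin_arctan_two : sin (arctan 2) = 2 * cos (arctan 2) := by
  rw [sin_arctan, cos_arctan]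
  ring

theorem cos_arctan_two : cos (arctan 2) = 1 / √5 := by
  rw [cos_arctan]
  norm_num

theorem cos_mul_sin_sub_cos_div_eq {a : ℝ} (ha : 0 ≤ a) (θ : ℝ) :
    cos θ * (sin θ - cos θ) / a =
      (1 / (2 * √a) * sin θ) ^ 2 + -(1 / (4 * a)) * (sin θ - 2 * cos θ) ^ 2 := by
  rw [mul_pow, div_pow, mul_pow, sq_sqrt ha]
  ring

theorem cos_mul_sin_sub_cos_div_arctan_two (a : ℝ) :
    cos (arctan 2) * (sin (arctan 2) - cos (arctan 2)) / a = 1 / (5 * a) := by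
  rw [sin_arctan_two, cos_arctan_two]
  field_simp
  norm_num [sq_sqrt]

theorem one_div_two_mul_sqrt_mul_sin_arctan_two {a : ℝ} (ha : 0 < a) :
    1 / (2 * √a) * sin (arctan 2) = 1 / √(5 * a) := by
  rw [sin_arctan_two, cos_arctan_two, sqrt_mul (by norm_num)]
  field_simp

theorem sq_sqrt_eventuallyEq {g : ℝ → ℝ} {x : ℝ} (hg : ContinuousAt g x) (hx : 0 < g x) :
    (fun y => √(g y) ^ 2) =ᶠ[𝓝 x] g := by
  filter_upwards [continuousAt_const.eventually_lt hg hx] with y hy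
  exact sq_sqrt hy.le

theorem deriv_sin_sub_two_mul_cos_arctan_two_pos :
    0 < deriv (fun θ => sin θ - 2 * cos θ) (arctan 2) := by
  have h : HasDerivAt (fun θ => sin θ - 2 * cos θ)
      (cos (arctan 2) - 2 * -sin (arctan 2)) (arctan 2) :=
    (hasDerivAt_sin _).sub ((hasDerivAt_cos _).const_mul 2)
  rw [h.deriv, sin_arctan_two]
  nlinarith [cos_arctan_pos 2]

/-- At `θ* = arctan 2`, the fast fibre `r_{ρ*}(θ) = ρ* sin θ`, `ρ* = 1/(2√a)`, and
`φ₀(θ) = √(cos θ(sin θ - cos θ)/a)` have a tangency of order exactly one: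
values and first derivatives coincide and equal `1/√(5a)`, but the second
derivatives differ. -/
theorem fold_point_tangency (a : ℝ) (ha : 0 < a)
    (θs ρs : ℝ) (hθs : θs = arctan 2) (hρs : ρs = 1 / (2 * Real.sqrt a))
    (rf φ₀ : ℝ → ℝ) (hrf : rf = fun θ => ρs * sin θ)
    (hφ₀ : φ₀ = fun θ => Real.sqrt (cos θ * (sin θ - cos θ) / a)) :
    rf θs = φ₀ θs ∧
    φ₀ θs = 1 / Real.sqrt (5 * a) ∧
    deriv rf θs = deriv φ₀ θs ∧
    deriv (deriv rf) θs ≠ deriv (deriv φ₀) θs := by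
  subst hθs hρs hrf hφ₀
  set g : ℝ → ℝ := fun θ => cos θ * (sin θ - cos θ) / a
  have hg : g (arctan 2) = 1 / (5 * a) := cos_mul_sin_sub_cos_div_arctan_two a
  have hφ : √(g (arctan 2)) = 1 / √(5 * a) := by
    rw [hg, sqrt_div' _ (by positivity), sqrt_one]
  have hr := one_div_two_mul_sqrt_mul_sin_arctan_two ha
  have hsq : (fun θ => √(g θ) ^ 2) =ᶠ[𝓝 (arctan 2)]
      fun θ => (1 / (2 * √a) * sin θ) ^ 2 + -(1 / (4 * a)) * (sin θ - 2 * cos θ) ^ 2 :=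
    (sq_sqrt_eventuallyEq (by fun_prop) (by rw [hg]; positivity)).trans
      (.of_eq (funext (cos_mul_sin_sub_cos_div_eq ha.le)))
  have hu : ContDiffAt ℝ 2 (fun θ => √(g θ)) (arctan 2) :=
    (by fun_prop : ContDiff ℝ 2 g).contDiffAt.sqrt (by rw [hg]; positivity)
  have hv : ContDiffAt ℝ 2 (fun θ => 1 / (2 * √a) * sin θ) (arctan 2) := by fun_prop
  have hw : ContDiffAt ℝ 2 (fun θ => sin θ - 2 * cos θ) (arctan 2) := by fun_prop
  have hw0 : sin (arctan 2) - 2 * cos (arctan 2) = 0 := by rw [sin_arctan_two, sub_self]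
  have huv := hφ.trans hr.symm
  have hu0 : √(g (arctan 2)) ≠ 0 := by rw [hφ]; positivity
  refine ⟨hr.trans hφ.symm, hφ, (deriv_eq_of_sq_eventuallyEq (hu.of_le one_le_two)
    (hv.of_le one_le_two) (hw.of_le one_le_two) hsq hw0 huv hu0).symm, fun h => ?_⟩
  have hdiff := deriv_deriv_sub_of_sq_eventuallyEq hu hv hw hsq hw0 huv hu0
  rw [h, sub_self, eq_comm] at hdiff
  refine div_ne_zero (mul_ne_zero ?_ (pow_ne_zero 2
    deriv_sin_sub_two_mul_cos_arctan_two_pos.ne')) hu0 hdiff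
  simp [ha.ne']
end

section
/- Suppose r: [0,T] → (0,∞) is differentiable and satisfies r' ≤ r(D r² - C) where C, D > 0 and r(s) < √(C/D) for all s ∈ [0,T]. Then r(t) ≤ K·r(0)·e^{-Ct} for all t ∈ [0,T], where K = F²/(F² - r(0)²) and F = √(C/D). -/
open Real Set

/-!
With `F² = C/D`, the quantity `w = r²/(F² - r²)` has derivative `2F² r r'/(F² - r²)²`, and since
`r (D r² - C) = -D r (F² - r²)` the hypothesis gives `w' ≤ -2C w`. Grönwall yields
`w t ≤ w 0 · e^{-2Ct}`; as `r² ≤ F² w` and `F²/(F² - r(0)²) ≥ 1`, taking square roots gives the bound.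
-/

theorem le_mul_exp_of_hasDerivAt_le_mul {f f' : ℝ → ℝ} {k a b : ℝ}
    (hf : ∀ x ∈ Icc a b, HasDerivAt f (f' x) x) (bound : ∀ x ∈ Icc a b, f' x ≤ k * f x) :
    ∀ x ∈ Icc a b, f x ≤ f a * exp (k * (x - a)) := by
  intro x hx
  have h := le_gronwallBound_of_liminf_deriv_right_le (δ := f a) (K := k) (ε := 0)
    (fun y hy => (hf y hy).continuousAt.continuousWithinAt)
    (fun y hy _ hr => (hf y (Ico_subset_Icc_self hy)).hasDerivWithinAt.liminf_right_slope_le hr)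
    le_rfl (fun y hy => by simpa using bound y (Ico_subset_Icc_self hy)) x hx
  rwa [gronwallBound_ε0] at h

theorem HasDerivAt.sq_div_const_sub_sq {r : ℝ → ℝ} {r' a x : ℝ} (hr : HasDerivAt r r' x)
    (hx : r x ^ 2 ≠ a) :
    HasDerivAt (fun y => r y ^ 2 / (a - r y ^ 2)) (2 * a * r x * r' / (a - r x ^ 2) ^ 2) x := by
  have hsq : HasDerivAt (fun y => r y ^ 2) (2 * r x * r') x :=
    (hr.fun_pow 2).congr_deriv (by norm_num)
  exact (hsq.fun_div ((hasDerivAt_const x a).fun_sub hsq) (sub_ne_zero.mpr hx.symm)).congr_deriv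
    (by ring)

theorem sq_div_sub_sq_deriv_le {a C D x y : ℝ} (hCD : C = D * a) (hx : 0 < x)
    (hxa : x ^ 2 < a) (hy : y ≤ x * (D * x ^ 2 - C)) :
    2 * a * x * y / (a - x ^ 2) ^ 2 ≤ -(2 * C) * (x ^ 2 / (a - x ^ 2)) := by
  have ha : 0 < a := (pow_pos hx 2).trans hxa
  have hax : a - x ^ 2 ≠ 0 := (sub_pos.mpr hxa).ne'
  calc 2 * a * x * y / (a - x ^ 2) ^ 2
      ≤ 2 * a * x * (x * (D * x ^ 2 - C)) / (a - x ^ 2) ^ 2 := by gcongr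
    _ = -(2 * C) * (x ^ 2 / (a - x ^ 2)) := by
      rw [hCD]
      field_simp
      ring

theorem le_of_sq_div_sub_sq_le {a x y q : ℝ} (hy : 0 ≤ y) (hya : y ^ 2 < a) (hxa : x ^ 2 < a)
    (hq : 0 ≤ q) (h : x ^ 2 / (a - x ^ 2) ≤ y ^ 2 / (a - y ^ 2) * q ^ 2) :
    x ≤ a / (a - y ^ 2) * y * q := by
  have hay : 0 < a - y ^ 2 := sub_pos.mpr hya
  have hax : 0 < a - x ^ 2 := sub_pos.mpr hxa
  have hK : 1 ≤ a / (a - y ^ 2) := by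
    rw [one_le_div hay]
    linarith [sq_nonneg y]
  have hx2 : x ^ 2 ≤ (a / (a - y ^ 2) * y * q) ^ 2 :=
    calc x ^ 2 = (a - x ^ 2) * (x ^ 2 / (a - x ^ 2)) := by field_simp
      _ ≤ a * (y ^ 2 / (a - y ^ 2) * q ^ 2) := by
        gcongr ?_ * ?_
        · linarith [sq_nonneg y]
        · linarith [sq_nonneg x]
      _ = 1 * (a / (a - y ^ 2)) * y ^ 2 * q ^ 2 := by ring
      _ ≤ (a / (a - y ^ 2)) * (a / (a - y ^ 2)) * y ^ 2 * q ^ 2 := by gcongr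
      _ = (a / (a - y ^ 2) * y * q) ^ 2 := by ring
  exact (abs_le_of_sq_le_sq' hx2 (by positivity)).2

theorem exp_decay_upper_bound_general (C D T : ℝ)
    (F : ℝ) (hF : F = Real.sqrt (C / D))
    (r r' : ℝ → ℝ)
    (hderiv : ∀ s ∈ Icc (0 : ℝ) T, HasDerivAt r (r' s) s)
    (hpos : ∀ s ∈ Icc (0 : ℝ) T, 0 < r s)
    (hlt : ∀ s ∈ Icc (0 : ℝ) T, r s < F)
    (hineq : ∀ s ∈ Icc (0 : ℝ) T, r' s ≤ r s * (D * (r s) ^ 2 - C)) :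
    ∀ t ∈ Icc (0 : ℝ) T,
      r t ≤ (F ^ 2 / (F ^ 2 - (r 0) ^ 2)) * r 0 * exp (-C * t) := by
  intro t ht
  have h0 : (0 : ℝ) ∈ Icc 0 T := ⟨le_rfl, ht.1.trans ht.2⟩
  have hCD_pos : 0 < C / D := sqrt_pos.mp (hF ▸ (hpos 0 h0).trans (hlt 0 h0))
  have hCD : C = D * F ^ 2 := by
    have hD : D ≠ 0 := (div_ne_zero_iff.mp hCD_pos.ne').2
    rw [hF, sq_sqrt hCD_pos.le]
    field_simp
  have hsq : ∀ s ∈ Icc (0 : ℝ) T, r s ^ 2 < F ^ 2 := fun s hs =>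
    pow_lt_pow_left₀ (hlt s hs) (hpos s hs).le two_ne_zero
  have hdecay := le_mul_exp_of_hasDerivAt_le_mul (k := -(2 * C))
    (fun s hs => (hderiv s hs).sq_div_const_sub_sq (hsq s hs).ne)
    (fun s hs => sq_div_sub_sq_deriv_le hCD (hpos s hs) (hsq s hs) (hineq s hs)) t ht
  refine le_of_sq_div_sub_sq_le (hpos 0 h0).le (hsq 0 h0) (hsq t ht) (exp_pos _).le ?_
  rwa [← exp_nat_mul, show (2 : ℕ) * (-C * t) = -(2 * C) * (t - 0) by push_cast; ring]

/-- If `r : [0,T] → (0,∞)` satisfies `r' ≤ r(D r² - C)` with `C, D > 0` and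
`r(s) < √(C/D)` on `[0,T]`, then `r(t) ≤ K r(0) e^{-Ct}` where
`K = F²/(F² - r(0)²)`, `F = √(C/D)`. -/
theorem exp_decay_upper_bound (C D T : ℝ) (hC : 0 < C) (hD : 0 < D) (hT : 0 ≤ T)
    (F : ℝ) (hF : F = Real.sqrt (C / D))
    (r r' : ℝ → ℝ)
    (hderiv : ∀ s ∈ Icc (0 : ℝ) T, HasDerivAt r (r' s) s)
    (hpos : ∀ s ∈ Icc (0 : ℝ) T, 0 < r s)
    (hlt : ∀ s ∈ Icc (0 : ℝ) T, r s < F)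
    (hineq : ∀ s ∈ Icc (0 : ℝ) T, r' s ≤ r s * (D * (r s) ^ 2 - C)) :
    ∀ t ∈ Icc (0 : ℝ) T,
      r t ≤ (F ^ 2 / (F ^ 2 - (r 0) ^ 2)) * r 0 * exp (-C * t) :=
  exp_decay_upper_bound_general C D T F hF r r' hderiv hpos hlt hineq
end

section
/- On the fast fibre {(θ, ρ sin θ) : θ ∈ [π/4, π/2]}, the inner product of the vector field F(θ,r) of the rescaled Brusselator (given componentwise by F₁ = -ar²sin θ(sin θ - cos θ) + sin θ cos θ(sin θ - cos θ)² + ε[-r²cos θ(sin θ - cos θ) + √ε a r³ cos θ], F₂ = -ar³cos θ(sin θ - cos θ) + r cos²θ(sin θ - cos θ)² + ε[r³ sin θ(sin θ - cos θ) - √ε a r⁴ sin θ]) with the normal vector n = (-ρ cos θ, 1) equals ε[ρ³ sin²θ(sin θ - cos θ) - √ε a ρ⁴ sin³θ], which is positive if and only if √ε·ρ < (sin θ - cos θ)/(a sin θ). -/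
open Real Set

/-- On the fast fibre `{(θ, ρ sin θ) : θ ∈ [π/4, π/2]}`, the inner product of the
rescaled Brusselator vector field `F = (F₁, F₂)` with the normal
`n = (-ρ cos θ, 1)` equals `ε[ρ³ sin²θ(sin θ - cos θ) - √ε a ρ⁴ sin³θ]`, which is
positive iff `√ε ρ < (sin θ - cos θ)/(a sin θ)`. -/
theorem fast_fibre_normal_inner_product (a ε ρ : ℝ) (ha : 0 < a) (hε : 0 < ε)
    (hρ : 0 < ρ)
    (F₁ F₂ : ℝ → ℝ → ℝ)
    (hF₁ : F₁ = fun θ r =>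
      -a * r ^ 2 * sin θ * (sin θ - cos θ) + sin θ * cos θ * (sin θ - cos θ) ^ 2 +
        ε * (-r ^ 2 * cos θ * (sin θ - cos θ) + Real.sqrt ε * a * r ^ 3 * cos θ))
    (hF₂ : F₂ = fun θ r =>
      -a * r ^ 3 * cos θ * (sin θ - cos θ) + r * (cos θ) ^ 2 * (sin θ - cos θ) ^ 2 +
        ε * (r ^ 3 * sin θ * (sin θ - cos θ) - Real.sqrt ε * a * r ^ 4 * sin θ)) :
    ∀ θ ∈ Icc (π / 4) (π / 2),
      (F₁ θ (ρ * sin θ) * (-(ρ * cos θ)) + F₂ θ (ρ * sin θ) * 1 =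
        ε * (ρ ^ 3 * (sin θ) ^ 2 * (sin θ - cos θ) -
          Real.sqrt ε * a * ρ ^ 4 * (sin θ) ^ 3)) ∧
      (0 < F₁ θ (ρ * sin θ) * (-(ρ * cos θ)) + F₂ θ (ρ * sin θ) * 1 ↔
        Real.sqrt ε * ρ < (sin θ - cos θ) / (a * sin θ)) := by
  intro θ hθ
  obtain ⟨h1, h2⟩ := hθ
  have hs : 0 < sin θ := by
    apply Real.sin_pos_of_pos_of_lt_pi
    · linarith [Real.pi_pos]
    · linarith [Real.pi_pos]
  subst hF₁ hF₂
  simp only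
  have hE : (-a * (ρ * sin θ) ^ 2 * sin θ * (sin θ - cos θ) +
        sin θ * cos θ * (sin θ - cos θ) ^ 2 +
        ε * (-(ρ * sin θ) ^ 2 * cos θ * (sin θ - cos θ) +
          Real.sqrt ε * a * (ρ * sin θ) ^ 3 * cos θ)) * (-(ρ * cos θ)) +
      (-a * (ρ * sin θ) ^ 3 * cos θ * (sin θ - cos θ) +
        (ρ * sin θ) * (cos θ) ^ 2 * (sin θ - cos θ) ^ 2 +
        ε * ((ρ * sin θ) ^ 3 * sin θ * (sin θ - cos θ) -
          Real.sqrt ε * a * (ρ * sin θ) ^ 4 * sin θ)) * 1 =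
      ε * (ρ ^ 3 * (sin θ) ^ 2 * (sin θ - cos θ) -
        Real.sqrt ε * a * ρ ^ 4 * (sin θ) ^ 3) := by
    linear_combination (ε * ρ ^ 3 * (sin θ) ^ 2 * (sin θ - cos θ) -
      ε * Real.sqrt ε * a * ρ ^ 4 * (sin θ) ^ 3) * (sin_sq_add_cos_sq θ)
  refine ⟨hE, ?_⟩
  rw [hE, lt_div_iff₀ (mul_pos ha hs)]
  have hX : ε * (ρ ^ 3 * (sin θ) ^ 2 * (sin θ - cos θ) -
      Real.sqrt ε * a * ρ ^ 4 * (sin θ) ^ 3) =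
      (ε * ρ ^ 3 * (sin θ) ^ 2) *
        ((sin θ - cos θ) - Real.sqrt ε * a * ρ * sin θ) := by ring
  rw [hX]
  have hC : 0 < ε * ρ ^ 3 * (sin θ) ^ 2 := by positivity
  constructor
  · intro h
    have h2 : 0 < (sin θ - cos θ) - Real.sqrt ε * a * ρ * sin θ := by nlinarith
    nlinarith
  · intro h
    have h2 : 0 < (sin θ - cos θ) - Real.sqrt ε * a * ρ * sin θ := by nlinarith
    exact mul_pos hC h2
end

section
/- The first-order coefficient in the ε-expansion of the slow manifold S²_ε of the desingularized Brusselator is φ₁(θ) = -φ₀(θ)cos θ/(2a(2cos θ - sin θ)); concretely, with f₀, g₀, f₂, g₂ as in the paper's expansion and φ₀² = cos θ(sin θ - cos θ)/a, the formula φ₂ = (f₂·φ₀' - g₂)/(∂_r g₀ - φ₀'·∂_r f₀) evaluated at (θ, φ₀(θ)) simplifies to -φ₀(θ)cos θ/(2a(2cos θ - sin θ)) for θ ∈ (arctan 2, π/2). -/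
open Real

/-!
On the critical manifold `φ₀` one has `a φ₀² = cos θ (sin θ - cos θ)`. Substituting this and
`sin² θ + cos² θ = 1`, the numerator collapses to `-φ₀ cos θ (sin θ - cos θ) / (2a)` and the
denominator to `(sin θ - cos θ)(2 cos θ - sin θ)`; the common factor `sin θ - cos θ` is nonzero
because `tan θ > 2` on `(arctan 2, π/2)`.
-/

theorem two_mul_cos_lt_sin_of_arctan_two_lt {θ : ℝ} (h₁ : arctan 2 < θ) (h₂ : θ < π / 2) :
    2 * cos θ < sin θ := by
  have hcos : 0 < cos θ :=
    cos_pos_of_mem_Ioo ⟨(neg_pi_div_two_lt_arctan 2).trans h₁, h₂⟩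
  have htan : 2 < tan θ := by
    simpa [tan_arctan] using tan_lt_tan_of_lt_of_lt_pi_div_two (neg_pi_div_two_lt_arctan 2) h₂ h₁
  rw [tan_eq_sin_div_cos, lt_div_iff₀ hcos] at htan
  exact htan

theorem hasDerivAt_neg_mul_mul_mul_quadratic (α β a k x : ℝ) :
    HasDerivAt (fun r => -r * α * β * (a * r ^ 2 - k)) (-α * β * (3 * a * x ^ 2 - k)) x :=
  ((((hasDerivAt_neg x).mul_const α).mul_const β).mul
    (((hasDerivAt_pow 2 x).const_mul a).sub_const k)).congr_deriv (by push_cast; ring)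

theorem hasDerivAt_neg_mul_mul_quadratic (α β a k x : ℝ) :
    HasDerivAt (fun r => -α * β * (a * r ^ 2 - k)) (-α * β * (2 * a * x)) x :=
  ((((hasDerivAt_pow 2 x).const_mul a).sub_const k).const_mul (-α * β)).congr_deriv
    (by push_cast; ring)

theorem slow_manifold_quotient_eq {a s c x : ℝ} (ha : a ≠ 0) (hx : x ≠ 0) (hsc : s - c ≠ 0)
    (hpyth : s ^ 2 + c ^ 2 = 1) (hx2 : a * x ^ 2 = c * (s - c)) :
    (-x ^ 2 * c * (s - c) * ((-s * (s - c) + c * (s + c)) / (2 * a * x)) - x ^ 3 * s * (s - c)) /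
        (-c * (s - c) * (3 * a * x ^ 2 - c * (s - c)) -
          (-s * (s - c) + c * (s + c)) / (2 * a * x) * (-s * (s - c) * (2 * a * x))) =
      -x * c / (2 * a * (2 * c - s)) := by
  have hnum : -x ^ 2 * c * (s - c) * ((-s * (s - c) + c * (s + c)) / (2 * a * x)) -
      x ^ 3 * s * (s - c) = -(x * c * (s - c)) / (2 * a) := by
    field_simp
    linear_combination (-2 * s) * hx2 + (-c) * hpyth
  have hden : -c * (s - c) * (3 * a * x ^ 2 - c * (s - c)) -
      (-s * (s - c) + c * (s + c)) / (2 * a * x) * (-s * (s - c) * (2 * a * x)) =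
      (s - c) * (2 * c - s) := by
    field_simp
    linear_combination (-3 * c) * hx2 + (2 * c - s) * hpyth
  rw [hnum, hden]
  field_simp

/-- The first-order coefficient in the ε-expansion of the slow manifold `S²_ε`:
with `f₀, g₀, f₂, g₂` as in the paper, `φ₀² = cos θ(sin θ - cos θ)/a` and
`φ₀' = (-sin θ(sin θ - cos θ) + cos θ(sin θ + cos θ))/(2aφ₀)`, the formula
`(f₂ φ₀' - g₂)/(∂_r g₀ - φ₀' ∂_r f₀)` evaluated at `(θ, φ₀(θ))` simplifies to
`-φ₀(θ) cos θ/(2a(2cos θ - sin θ))` for `θ ∈ (arctan 2, π/2)`. -/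
theorem slow_manifold_first_order_coefficient (a : ℝ) (ha : 0 < a)
    (p f₀ g₀ f₂ g₂ : ℝ → ℝ → ℝ) (φ₀ dφ₀ : ℝ → ℝ)
    (hp : p = fun θ r => a * r ^ 2 - cos θ * (sin θ - cos θ))
    (hf₀ : f₀ = fun θ r => -sin θ * (sin θ - cos θ) * p θ r)
    (hg₀ : g₀ = fun θ r => -r * cos θ * (sin θ - cos θ) * p θ r)
    (hf₂ : f₂ = fun θ r => -r ^ 2 * cos θ * (sin θ - cos θ))
    (hg₂ : g₂ = fun θ r => r ^ 3 * sin θ * (sin θ - cos θ))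
    (hφ₀ : φ₀ = fun θ => Real.sqrt (cos θ * (sin θ - cos θ) / a))
    (hdφ₀ : dφ₀ = fun θ =>
      (-sin θ * (sin θ - cos θ) + cos θ * (sin θ + cos θ)) / (2 * a * φ₀ θ)) :
    ∀ θ : ℝ, arctan 2 < θ → θ < π / 2 →
      (f₂ θ (φ₀ θ) * dφ₀ θ - g₂ θ (φ₀ θ)) /
          (deriv (fun r => g₀ θ r) (φ₀ θ) - dφ₀ θ * deriv (fun r => f₀ θ r) (φ₀ θ)) =
        -(φ₀ θ) * cos θ / (2 * a * (2 * cos θ - sin θ)) := by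
  intro θ h₁ h₂
  subst hp hf₀ hg₀ hf₂ hg₂ hdφ₀
  beta_reduce
  have h2cs : 2 * cos θ < sin θ := two_mul_cos_lt_sin_of_arctan_two_lt h₁ h₂
  have hcos : 0 < cos θ := cos_pos_of_mem_Ioo ⟨(neg_pi_div_two_lt_arctan 2).trans h₁, h₂⟩
  have hk : 0 < cos θ * (sin θ - cos θ) / a := by
    have : 0 < sin θ - cos θ := by linarith
    positivity
  have hx : 0 < φ₀ θ := by rw [hφ₀]; exact sqrt_pos.mpr hk
  have hx2 : a * φ₀ θ ^ 2 = cos θ * (sin θ - cos θ) := by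
    rw [hφ₀, sq_sqrt hk.le]
    field_simp
  rw [(hasDerivAt_neg_mul_mul_mul_quadratic _ _ _ _ _).deriv,
    (hasDerivAt_neg_mul_mul_quadratic _ _ _ _ _).deriv]
  exact slow_manifold_quotient_eq ha.ne' hx.ne' (by linarith)
    (sin_sq_add_cos_sq θ) hx2
end
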